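/- For all powers of two m and n with m ≥ 16, n ≥ 4, and m ≤ 4n, letting N be the subgroup of G = G(m,n) generated by a^4, the subgroup Ω(G/N) of elements of order dividing 2 in the abelian quotient G/N is contained in the Frattini subgroup of G/N. -/

import Mathlib

/-- The relators of the presentation `⟨a, b | a^m, b^n, [b,a] = a^4⟩`, where `a` is
`FreeGroup.of true`, `b` is `FreeGroup.of false`, and `[b,a] = b⁻¹a⁻¹ba`. -/
def GRels (m n : ℕ) : Set (FreeGroup Bool) :=
  { FreeGroup.of true ^ m,
    FreeGroup.of false ^ n,
    (FreeGroup.of false)⁻¹ * (FreeGroup.of true)⁻¹ * FreeGroup.of false *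
      FreeGroup.of true * (FreeGroup.of true ^ 4)⁻¹ }

/-- The group `G(m, n) = ⟨a, b | a^m, b^n, [b,a] = a^4⟩`. -/
abbrev Gmn (m n : ℕ) : Type := PresentedGroup (GRels m n)

/-- The image of the generator `a` in `G(m, n)`. -/
def gen_a (m n : ℕ) : Gmn m n := PresentedGroup.of true

/-- The image of the generator `b` in `G(m, n)`. -/
def gen_b (m n : ℕ) : Gmn m n := PresentedGroup.of false

/-!
Modulo `N = ⟨a^4⟩` the relation `[b,a] = a^4` becomes `[b,a] = 1`, so `G/N` is abelian, generated
by the images `A`, `B` of `a`, `b`, with `A^4 = B^n = 1`; in particular `G/N` has exponent dividing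
`n`. The character `a ↦ (1, 0)`, `b ↦ (0, 1)` to `ZMod 4 × ZMod n` shows that `(A^c B^d)^2 = 1`
forces `c` and `d` to be even (as `4 ∣ n`), so every involution of `G/N` is a square `y^2` with
`y^n = 1`. In an abelian group such a square lies in every maximal subgroup `M`: otherwise
`M ⟨y^2⟩ = G` gives `y^(1 - 2t) ∈ M` for some `t`, and `1 - 2t` is invertible modulo the
`2`-power order of `y`, so `y ∈ M`.
-/

open Subgroup

section

variable {G : Type*} [Group G]

theorem isMulCommutative_of_closure_eq_top {s : Set G} (hs : closure s = ⊤)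
    (hcomm : ∀ x ∈ s, ∀ y ∈ s, x * y = y * x) : IsMulCommutative G := by
  have h := closure_le_centralizer_centralizer s
  rw [hs] at h
  exact .of_comm fun x y ↦
    Set.centralizer_centralizer_comm_of_comm hcomm x (h (mem_top x)) y (h (mem_top y))

theorem Subgroup.mem_of_zpow_mem_of_isCoprime {M : Subgroup G} {y : G} {k l : ℤ}
    (hk : y ^ k ∈ M) (hl : y ^ l = 1) (hkl : IsCoprime k l) : y ∈ M := by
  obtain ⟨u, v, huv⟩ := hkl
  have hy : y = (y ^ k) ^ u * (y ^ l) ^ v := by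
    rw [← zpow_mul, ← zpow_mul, ← zpow_add, mul_comm k, mul_comm l, huv, zpow_one]
  rw [hy, hl, one_zpow, mul_one]
  exact zpow_mem hk u

theorem pow_mem_frattini_of_pow_pow_eq_one [IsMulCommutative G] {p e : ℕ} {y : G}
    (hy : y ^ p ^ e = 1) : y ^ p ∈ frattini G := by
  simp only [frattini, Order.radical, mem_iInf]
  intro M hM
  by_contra hyM
  have htop : M ⊔ zpowers (y ^ p) = ⊤ :=
    hM.2 _ (left_lt_sup.2 fun h ↦ hyM (h (mem_zpowers _)))
  obtain ⟨z, hz, _, ⟨t, rfl⟩, hzy⟩ := mem_sup_of_normal_right.1 (htop ▸ mem_top y)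
  have hyz : y ^ (1 - p * t) = z := by
    rw [eq_mul_inv_of_mul_eq hzy, sub_eq_add_neg, zpow_add, zpow_one, zpow_neg, zpow_mul,
      zpow_natCast]
  have hcop : IsCoprime (1 - p * t) ((p : ℤ) ^ e) := IsCoprime.pow_right ⟨1, t, by ring⟩
  refine hyM (pow_mem (M.mem_of_zpow_mem_of_isCoprime (hyz ▸ hz) ?_ hcop) p)
  exact_mod_cast hy

end

theorem Nat.pow_dvd_pow_of_pow_le_pow {p a b : ℕ} (hp : 1 < p) (h : p ^ a ≤ p ^ b) :
    p ^ a ∣ p ^ b :=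
  pow_dvd_pow p ((Nat.pow_le_pow_iff_right hp).1 h)

namespace Gmn

variable {m n : ℕ}

theorem gen_b_pow_eq_one : gen_b m n ^ n = 1 := by
  simpa [gen_b, PresentedGroup.of] using
    PresentedGroup.one_of_mem (rels := GRels m n) (.inr (.inl rfl))

theorem commutator_gen_b_gen_a :
    (gen_b m n)⁻¹ * (gen_a m n)⁻¹ * gen_b m n * gen_a m n = gen_a m n ^ 4 := by
  simpa [gen_a, gen_b, PresentedGroup.of, mul_inv_eq_one] using
    PresentedGroup.one_of_mem (rels := GRels m n) (.inr (.inr rfl))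

def toZModProd (hm : 4 ∣ m) : Gmn m n →* Multiplicative (ZMod 4 × ZMod n) :=
  PresentedGroup.toGroup (f := fun x ↦ .ofAdd (if x then (1, 0) else (0, 1))) <| by
    rintro r (rfl | rfl | rfl)
    · simp [← ofAdd_nsmul, (ZMod.natCast_eq_zero_iff m 4).2 hm]
    · simp [← ofAdd_nsmul]
    · simp [← ofAdd_nsmul, ← ofAdd_neg, ← ofAdd_add, show (4 : ZMod 4) = 0 from rfl]

theorem toZModProd_gen_a (hm : 4 ∣ m) : toZModProd (n := n) hm (gen_a m n) = .ofAdd (1, 0) :=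
  PresentedGroup.toGroup.of _

theorem toZModProd_gen_b (hm : 4 ∣ m) : toZModProd hm (gen_b m n) = .ofAdd (0, 1) :=
  PresentedGroup.toGroup.of _

theorem closure_le_ker_toZModProd (hm : 4 ∣ m) :
    closure {gen_a m n ^ 4} ≤ (toZModProd (n := n) hm).ker := by
  rw [closure_le, Set.singleton_subset_iff, SetLike.mem_coe, MonoidHom.mem_ker, map_pow,
    toZModProd_gen_a]
  simp [← ofAdd_nsmul, show (4 : ZMod 4) = 0 from rfl]

variable [(closure {gen_a m n ^ 4} : Subgroup (Gmn m n)).Normal]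

local notation "Q" => Gmn m n ⧸ (closure {gen_a m n ^ 4} : Subgroup (Gmn m n))

theorem mk_gen_a_pow_four_eq_one : (gen_a m n : Q) ^ 4 = 1 := by
  rw [← QuotientGroup.mk_pow, QuotientGroup.eq_one_iff]
  exact subset_closure rfl

theorem mk_gen_b_pow_eq_one : (gen_b m n : Q) ^ n = 1 := by
  rw [← QuotientGroup.mk_pow, gen_b_pow_eq_one, QuotientGroup.mk_one]

theorem commute_mk_gen_a_mk_gen_b : Commute (gen_a m n : Q) (gen_b m n) := by
  have h := congrArg ((↑) : Gmn m n → Q) commutator_gen_b_gen_a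
  simp only [QuotientGroup.mk_mul, QuotientGroup.mk_inv, QuotientGroup.mk_pow,
    mk_gen_a_pow_four_eq_one] at h
  rwa [← mul_inv_rev, mul_assoc, inv_mul_eq_one] at h

theorem closure_mk_gen_a_mk_gen_b_eq_top :
    closure {(gen_a m n : Q), (gen_b m n : Q)} = ⊤ := by
  have hrange : Set.range PresentedGroup.of = ({gen_a m n, gen_b m n} : Set (Gmn m n)) := by
    ext g
    simp [gen_a, gen_b, or_comm]
  have h := congrArg (map (QuotientGroup.mk' (closure {gen_a m n ^ 4})))
    (PresentedGroup.closure_range_of (GRels m n))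
  rw [MonoidHom.map_closure, hrange, Set.image_pair,
    map_top_of_surjective _ (QuotientGroup.mk'_surjective _)] at h
  exact h

instance : IsMulCommutative Q := by
  refine isMulCommutative_of_closure_eq_top closure_mk_gen_a_mk_gen_b_eq_top ?_
  rintro _ (rfl | rfl) _ (rfl | rfl)
  exacts [rfl, commute_mk_gen_a_mk_gen_b.eq, commute_mk_gen_a_mk_gen_b.eq.symm, rfl]

open scoped IsMulCommutative

theorem pow_eq_one_of_four_dvd (hn : 4 ∣ n) (y : Q) : y ^ n = 1 := by
  have hA : (gen_a m n : Q) ^ n = 1 := by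
    obtain ⟨k, rfl⟩ := hn
    rw [pow_mul, mk_gen_a_pow_four_eq_one, one_pow]
  have h : closure {(gen_a m n : Q), (gen_b m n : Q)} ≤ (powMonoidHom n : Q →* Q).ker := by
    rw [closure_le, Set.insert_subset_iff, Set.singleton_subset_iff]
    exact ⟨hA, mk_gen_b_pow_eq_one⟩
  exact h (closure_mk_gen_a_mk_gen_b_eq_top (m := m) (n := n) ▸ mem_top y)

theorem exists_sq_eq_of_sq_eq_one (hm : 4 ∣ m) (hn : 4 ∣ n) {x : Q} (hx : x ^ 2 = 1) :
    ∃ y, y ^ 2 = x := by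
  obtain ⟨c, d, rfl⟩ :=
    mem_closure_pair.1 (closure_mk_gen_a_mk_gen_b_eq_top (m := m) (n := n) ▸ mem_top x)
  have hχ := congrArg
    (QuotientGroup.lift _ (toZModProd (n := n) hm) (closure_le_ker_toZModProd hm)) hx
  simp only [map_pow, map_mul, map_zpow, map_one, QuotientGroup.lift_mk, toZModProd_gen_a,
    toZModProd_gen_b, ← ofAdd_zsmul, ← ofAdd_nsmul, ← ofAdd_add, ofAdd_eq_one] at hχ
  have hcd : ((2 * c : ℤ) : ZMod 4) = 0 ∧ ((2 * d : ℤ) : ZMod n) = 0 := by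
    simpa [Prod.ext_iff] using hχ
  rw [ZMod.intCast_zmod_eq_zero_iff_dvd, ZMod.intCast_zmod_eq_zero_iff_dvd] at hcd
  obtain ⟨c, rfl⟩ : 2 ∣ c := by omega
  obtain ⟨d, rfl⟩ : 2 ∣ d := by
    have := (Int.natCast_dvd_natCast.2 hn).trans hcd.2
    omega
  refine ⟨(gen_a m n : Q) ^ c * (gen_b m n : Q) ^ d, ?_⟩
  rw [mul_pow, zpow_mul', zpow_mul', zpow_ofNat, zpow_ofNat]

end Gmn

theorem Gmn_omega_le_frattini_general (m n : ℕ)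
    (hm : ∃ i, m = 2 ^ i) (hn : ∃ j, n = 2 ^ j)
    (hm16 : 16 ≤ m) (hn4 : 4 ≤ n)
    [hN : (Subgroup.closure {gen_a m n ^ 4} : Subgroup (Gmn m n)).Normal] :
    ∀ x : Gmn m n ⧸ (Subgroup.closure {gen_a m n ^ 4} : Subgroup (Gmn m n)),
      x ^ 2 = 1 →
      x ∈ frattini (Gmn m n ⧸ (Subgroup.closure {gen_a m n ^ 4} : Subgroup (Gmn m n))) := by
  obtain ⟨i, rfl⟩ := hm
  obtain ⟨j, rfl⟩ := hn
  have h4m : 4 ∣ 2 ^ i := Nat.pow_dvd_pow_of_pow_le_pow (a := 2) one_lt_two (by omega)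
  have h4n : 4 ∣ 2 ^ j := Nat.pow_dvd_pow_of_pow_le_pow (a := 2) one_lt_two (by omega)
  intro x hx
  obtain ⟨y, rfl⟩ := Gmn.exists_sq_eq_of_sq_eq_one h4m h4n hx
  exact pow_mem_frattini_of_pow_pow_eq_one (Gmn.pow_eq_one_of_four_dvd h4n y)

/-- The subgroup `Ω(G/N)` of elements of order dividing 2 in the abelian quotient
`G(m,n)/N`, where `N = ⟨a^4⟩` (which is normal, as recorded by the instance
hypothesis), is contained in the Frattini subgroup of `G(m,n)/N`. -/
theorem Gmn_omega_le_frattini (m n : ℕ)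
    (hm : ∃ i, m = 2 ^ i) (hn : ∃ j, n = 2 ^ j)
    (hm16 : 16 ≤ m) (hn4 : 4 ≤ n) (hmn : m ≤ 4 * n)
    [hN : (Subgroup.closure {gen_a m n ^ 4} : Subgroup (Gmn m n)).Normal] :
    ∀ x : Gmn m n ⧸ (Subgroup.closure {gen_a m n ^ 4} : Subgroup (Gmn m n)),
      x ^ 2 = 1 →
      x ∈ frattini (Gmn m n ⧸ (Subgroup.closure {gen_a m n ^ 4} : Subgroup (Gmn m n))) :=
  Gmn_omega_le_frattini_general m n hm hn hm16 hn4 (hN := hN)
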